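/- For all α, β > 0 and every integer n ≥ 1, the n-th moment of the Bessel distribution is given by the convergent series ∫_{[0,∞)} x^n m_{α,β}(dx) = (e^{−α}/β^n) Σ_{k=0}^∞ α^{k+1} (n+k)! / (k!(k+1)!). -/

import Mathlib

/-!
Expanding `I₁` as a power series writes the absolutely continuous part of `m_{α,β}` as a countable
mixture `∑ₖ wₖ xᵏ e^{-βx} dx` on `(0, ∞)` of Gamma densities, with
`wₖ = e^{-α} (αβ)^{k+1} / (k! (k+1)!)`. The Gamma integral gives the `n`-th moment
`wₖ (n+k)! / β^{n+k+1}` of each piece, and these add up over the sum of measures; the atom at `0`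
contributes nothing because `n ≥ 1`. Summability of the series comes from
`(n+k)! ≤ 2^{n+k} n! k!`.
-/

open MeasureTheory Filter Set
open scoped ENNReal

/-- The modified Bessel function of the first kind of order one,
`I₁(r) = (r/2) Σ_{k=0}^∞ (r²/4)^k / (k!(k+1)!)`. -/
noncomputable def besselI1 (r : ℝ) : ℝ :=
  r / 2 * ∑' k : ℕ, (r ^ 2 / 4) ^ k / ((Nat.factorial k : ℝ) * (Nat.factorial (k + 1) : ℝ))

/-- The Bessel distribution `m_{α,β}` on `[0,∞)`:
`m_{α,β}(dx) = e^{−α} δ₀(dx) + β e^{−α−βx} √(α/(βx)) I₁(2√(αβx)) dx`. -/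
noncomputable def besselMeasure (α β : ℝ) : Measure ℝ :=
  ENNReal.ofReal (Real.exp (-α)) • Measure.dirac (0 : ℝ) +
    MeasureTheory.volume.withDensity fun x =>
      ENNReal.ofReal (Set.indicator (Set.Ioi (0 : ℝ))
        (fun x => β * Real.exp (-α - β * x) * Real.sqrt (α / (β * x)) *
          besselI1 (2 * Real.sqrt (α * β * x))) x)

open Real Nat

theorem summable_pow_div_factorial_mul_factorial_succ (t : ℝ) :
    Summable fun k : ℕ => t ^ k / ((k ! : ℝ) * ((k + 1)! : ℝ)) := by
  refine (Real.summable_pow_div_factorial |t|).of_norm_bounded fun k => ?_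
  have hk : (0 : ℝ) < k ! := mod_cast k.factorial_pos
  have hk1 : (1 : ℝ) ≤ (k + 1)! := mod_cast (k + 1).factorial_pos
  rw [norm_div, norm_pow, Real.norm_eq_abs, norm_of_nonneg (by positivity)]
  gcongr
  exact le_mul_of_one_le_right hk.le hk1

noncomputable def besselWeight (α β : ℝ) (k : ℕ) : ℝ :=
  exp (-α) * (α * β) ^ (k + 1) / ((k ! : ℝ) * ((k + 1)! : ℝ))

theorem besselWeight_nonneg {α β : ℝ} (hα : 0 ≤ α) (hβ : 0 ≤ β) (k : ℕ) :
    0 ≤ besselWeight α β k := by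
  unfold besselWeight
  positivity

theorem hasSum_besselWeight_mul {α β x : ℝ} (hα : 0 ≤ α) (hβ : 0 < β) (hx : 0 < x) :
    HasSum (fun k => besselWeight α β k * (x ^ k * exp (-(β * x))))
      (β * exp (-α - β * x) * √(α / (β * x)) * besselI1 (2 * √(α * β * x))) := by
  have hsq : (2 * √(α * β * x)) ^ 2 / 4 = α * β * x := by
    rw [mul_pow, sq_sqrt (by positivity)]; ring
  have hsqrt : √(α / (β * x)) * √(α * β * x) = α := by
    rw [← sqrt_mul (by positivity), show α / (β * x) * (α * β * x) = α ^ 2 by field_simp]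
    exact sqrt_sq hα
  have hexp : exp (-α - β * x) = exp (-α) * exp (-(β * x)) := by
    rw [← exp_add]; ring_nf
  have hseries := ((summable_pow_div_factorial_mul_factorial_succ (α * β * x)).hasSum).mul_left
    (exp (-α) * (α * β) * exp (-(β * x)))
  have hterms : (fun k => besselWeight α β k * (x ^ k * exp (-(β * x)))) =
      fun k => exp (-α) * (α * β) * exp (-(β * x)) *
        ((α * β * x) ^ k / ((k ! : ℝ) * ((k + 1)! : ℝ))) := by
    funext k
    unfold besselWeight
    ring
  have hsum : β * exp (-α - β * x) * √(α / (β * x)) * besselI1 (2 * √(α * β * x)) =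
      exp (-α) * (α * β) * exp (-(β * x)) *
        ∑' k : ℕ, (α * β * x) ^ k / ((k ! : ℝ) * ((k + 1)! : ℝ)) := by
    unfold besselI1
    rw [hsq, hexp]
    linear_combination (β * exp (-α) * exp (-(β * x)) *
      ∑' k : ℕ, (α * β * x) ^ k / ((k ! : ℝ) * ((k + 1)! : ℝ))) * hsqrt
  rw [hterms, hsum]
  exact hseries

theorem integrableOn_Ioi_pow_mul_exp_neg_mul (m : ℕ) {b : ℝ} (hb : 0 < b) :
    IntegrableOn (fun x : ℝ => x ^ m * exp (-(b * x))) (Ioi 0) := by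
  refine (integrableOn_rpow_mul_exp_neg_mul_rpow (p := 1) (s := m)
    (neg_one_lt_zero.trans_le m.cast_nonneg) one_pos hb).congr_fun (fun x _ => ?_) measurableSet_Ioi
  simp only [rpow_one, rpow_natCast, neg_mul]

theorem integral_Ioi_pow_mul_exp_neg_mul (m : ℕ) {b : ℝ} (hb : 0 < b) :
    ∫ x in Ioi 0, x ^ m * exp (-(b * x)) = m ! / b ^ (m + 1) := by
  have h := integral_rpow_mul_exp_neg_mul_Ioi (a := m + 1) (by positivity) hb
  rw [add_sub_cancel_right, Gamma_nat_eq_factorial, ← Nat.cast_succ, rpow_natCast] at h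
  simp_rw [rpow_natCast] at h
  rw [h, one_div_pow, Nat.succ_eq_add_one]
  ring

/-- The Gamma distribution with shape `k + 1` and rate `b`, without its normalizing constant
`b ^ (k + 1) / k !`. -/
noncomputable def powExpMeasure (b : ℝ) (k : ℕ) : Measure ℝ :=
  (volume.restrict (Ioi 0)).withDensity fun x => ENNReal.ofReal (x ^ k * exp (-(b * x)))

section powExpMeasure

variable (b : ℝ) (k : ℕ)

theorem ae_pos_powExpMeasure : ∀ᵐ x ∂powExpMeasure b k, 0 < x :=
  (withDensity_absolutelyContinuous _ _).ae_le (ae_restrict_mem measurableSet_Ioi)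

theorem integral_norm_pow_powExpMeasure (n : ℕ) :
    ∫ x, ‖x ^ n‖ ∂powExpMeasure b k = ∫ x, x ^ n ∂powExpMeasure b k :=
  integral_congr_ae <| (ae_pos_powExpMeasure b k).mono fun _ hx => norm_of_nonneg (by positivity)

theorem integral_powExpMeasure (g : ℝ → ℝ) :
    ∫ x, g x ∂powExpMeasure b k = ∫ x in Ioi 0, x ^ k * exp (-(b * x)) * g x := by
  rw [powExpMeasure, integral_withDensity_eq_integral_toReal_smul (by fun_prop)
    (ae_of_all _ fun _ => ENNReal.ofReal_lt_top)]
  refine setIntegral_congr_fun measurableSet_Ioi fun x (hx : 0 < x) => ?_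
  rw [ENNReal.toReal_ofReal (by positivity), smul_eq_mul]

theorem integrable_powExpMeasure_iff {g : ℝ → ℝ} :
    Integrable g (powExpMeasure b k) ↔
      IntegrableOn (fun x => x ^ k * exp (-(b * x)) * g x) (Ioi 0) := by
  rw [powExpMeasure, integrable_withDensity_iff (by fun_prop)
    (ae_of_all _ fun _ => ENNReal.ofReal_lt_top)]
  refine integrableOn_congr_fun (fun x (hx : 0 < x) => ?_) measurableSet_Ioi
  rw [ENNReal.toReal_ofReal (by positivity), mul_comm]

variable {b}

theorem integrable_pow_powExpMeasure (hb : 0 < b) (n : ℕ) :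
    Integrable (fun x => x ^ n) (powExpMeasure b k) := by
  rw [integrable_powExpMeasure_iff]
  exact (integrableOn_Ioi_pow_mul_exp_neg_mul (n + k) hb).congr_fun (fun x _ => by ring)
    measurableSet_Ioi

theorem integral_pow_powExpMeasure (hb : 0 < b) (n : ℕ) :
    ∫ x, x ^ n ∂powExpMeasure b k = (n + k)! / b ^ (n + k + 1) := by
  rw [integral_powExpMeasure, ← integral_Ioi_pow_mul_exp_neg_mul (n + k) hb]
  congr 1 with x
  ring

end powExpMeasure

theorem besselMeasure_eq_sum {α β : ℝ} (hα : 0 ≤ α) (hβ : 0 < β) :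
    besselMeasure α β = ENNReal.ofReal (exp (-α)) • Measure.dirac 0 +
      Measure.sum fun k => ENNReal.ofReal (besselWeight α β k) • powExpMeasure β k := by
  set f : ℕ → ℝ → ℝ≥0∞ := fun k =>
    ENNReal.ofReal (besselWeight α β k) • fun x => ENNReal.ofReal (x ^ k * exp (-(β * x)))
  have hseries : ∀ x ∈ Ioi (0 : ℝ),
      ENNReal.ofReal (β * exp (-α - β * x) * √(α / (β * x)) * besselI1 (2 * √(α * β * x))) =
        (∑' k, f k) x := by
    intro x (hx : 0 < x)
    have hsum := hasSum_besselWeight_mul hα hβ hx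
    rw [← hsum.tsum_eq, ENNReal.ofReal_tsum_of_nonneg
      (fun k => mul_nonneg (besselWeight_nonneg hα hβ.le k) (by positivity)) hsum.summable,
      ENNReal.tsum_apply]
    congr 1 with k
    rw [ENNReal.ofReal_mul (besselWeight_nonneg hα hβ.le k)]
    rfl
  rw [besselMeasure, ← Function.comp_def ENNReal.ofReal,
    ← indicator_comp_of_zero ENNReal.ofReal_zero, withDensity_indicator measurableSet_Ioi,
    Function.comp_def,
    withDensity_congr_ae ((ae_restrict_mem measurableSet_Ioi).mono hseries),
    withDensity_tsum fun k => by fun_prop]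
  congr 2 with k : 1
  exact withDensity_smul _ (by fun_prop)

theorem summable_pow_mul_factorial_add_div {α : ℝ} (hα : 0 ≤ α) (n : ℕ) :
    Summable fun k : ℕ => α ^ (k + 1) * ((n + k)! : ℝ) / ((k ! : ℝ) * ((k + 1)! : ℝ)) := by
  refine Summable.of_nonneg_of_le (fun k => by positivity) (fun k => ?_)
    ((Real.summable_pow_div_factorial (2 * α)).mul_left (2 ^ n * n ! * α))
  have hchoose : ((n + k)! : ℝ) ≤ 2 ^ (n + k) * n ! * k ! := by
    rw [← Nat.add_choose_mul_factorial_mul_factorial n k]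
    exact_mod_cast Nat.mul_le_mul_right _ (Nat.mul_le_mul_right _ (Nat.choose_le_two_pow _ _))
  have hk : (k ! : ℝ) ≤ (k + 1)! := mod_cast Nat.factorial_le k.le_succ
  calc α ^ (k + 1) * ((n + k)! : ℝ) / ((k ! : ℝ) * ((k + 1)! : ℝ))
      ≤ α ^ (k + 1) * (2 ^ (n + k) * n ! * k !) / ((k ! : ℝ) * k !) := by gcongr
    _ = 2 ^ n * n ! * α * ((2 * α) ^ k / k !) := by
      field_simp
      ring

theorem bessel_nth_moment (α β : ℝ) (hα : 0 < α) (hβ : 0 < β) (n : ℕ) (hn : 1 ≤ n) :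
    Summable (fun k : ℕ =>
        α ^ (k + 1) * (Nat.factorial (n + k) : ℝ) /
          ((Nat.factorial k : ℝ) * (Nat.factorial (k + 1) : ℝ))) ∧
    Integrable (fun x : ℝ => x ^ n) (besselMeasure α β) ∧
    ∫ x, x ^ n ∂ besselMeasure α β =
      Real.exp (-α) / β ^ n *
        ∑' k : ℕ, α ^ (k + 1) * (Nat.factorial (n + k) : ℝ) /
          ((Nat.factorial k : ℝ) * (Nat.factorial (k + 1) : ℝ)) := by
  set a : ℕ → ℝ := fun k => α ^ (k + 1) * ((n + k)! : ℝ) / ((k ! : ℝ) * ((k + 1)! : ℝ))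
  set μ : ℕ → Measure ℝ := fun k => ENNReal.ofReal (besselWeight α β k) • powExpMeasure β k
  have ha : Summable a := summable_pow_mul_factorial_add_div hα.le n
  have hμ : ∀ k, ∫ x, x ^ n ∂μ k = exp (-α) / β ^ n * a k := fun k => by
    rw [integral_smul_measure, integral_pow_powExpMeasure k hβ,
      ENNReal.toReal_ofReal (besselWeight_nonneg hα.le hβ.le k), smul_eq_mul, besselWeight]
    dsimp only [a]
    field_simp
    ring
  have hcont : Integrable (fun x => x ^ n) (Measure.sum μ) := by
    refine integrable_sum_measure (fun k => (integrable_pow_powExpMeasure k hβ n).smul_measure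
      ENNReal.ofReal_ne_top) ?_
    refine (ha.mul_left (exp (-α) / β ^ n)).congr fun k => ?_
    rw [← hμ]
    simp only [μ, integral_smul_measure, integral_norm_pow_powExpMeasure]
  have hatom : Integrable (fun x : ℝ => x ^ n) (ENNReal.ofReal (exp (-α)) • Measure.dirac 0) :=
    (integrable_dirac (by simp)).smul_measure ENNReal.ofReal_ne_top
  rw [besselMeasure_eq_sum hα.le hβ]
  refine ⟨ha, hatom.add_measure hcont, ?_⟩
  rw [integral_add_measure hatom hcont, integral_smul_measure, integral_dirac,
    zero_pow (by omega), smul_zero, zero_add, integral_sum_measure hcont, ← tsum_mul_left]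
  exact tsum_congr hμ
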